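/- arXiv:2109.02583 — 3 statements merged into one kernel-verified Lean document; each statement's English description precedes it below -/
import Mathlib

section
/- Let X be a topological space and T : ℕ^k → (X → X) an action by continuous maps such that for every z ∈ X the orbit Orb(z) := { y ∈ X : T^m(y) = T^n(z) for some m,n ∈ ℕ^k } is dense in X. Suppose p ∈ ℤ^k and there exist m, n ∈ ℕ^k with m − n = p, and a nonempty open set U ⊆ X, such that T^m(u) = T^n(u) for all u ∈ U. Then for every z ∈ X there exist a, b ∈ ℕ^k with a − b = p and T^a(z) = T^b(z). -/
theorem stmt_12 {X : Type*} [TopologicalSpace X] {k : ℕ} (hk : 1 ≤ k)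
    (T : (Fin k → ℕ) → X → X)
    (h0 : T 0 = id) (hadd : ∀ m n : Fin k → ℕ, T (m + n) = T m ∘ T n)
    (hcont : ∀ m : Fin k → ℕ, Continuous (T m))
    (hmin : ∀ z : X, Dense {y : X | ∃ m n : Fin k → ℕ, T m y = T n z})
    (p : Fin k → ℤ) (m n : Fin k → ℕ)
    (hp : (fun i => (m i : ℤ) - (n i : ℤ)) = p)
    (U : Set X) (hUopen : IsOpen U) (hUne : U.Nonempty)
    (hagree : ∀ u ∈ U, T m u = T n u) :
    ∀ z : X, ∃ a b : Fin k → ℕ,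
      (fun i => (a i : ℤ) - (b i : ℤ)) = p ∧ T a z = T b z := by
  intro z
  obtain ⟨y, hyU, c, d, hcd⟩ := (hmin z).inter_open_nonempty U hUopen hUne
  refine ⟨m + d, n + d, ?_, ?_⟩
  · funext i
    simp only [Pi.add_apply, Nat.cast_add]
    have := congrFun hp i
    push_cast at this ⊢
    linarith
  · have key : T m (T d z) = T n (T d z) := by
      rw [← hcd]
      have h1 : T m (T c y) = T c (T m y) := by
        have := congrFun (hadd m c) y
        have h2 := congrFun (hadd c m) y
        rw [add_comm] at this
        simpa using this.symm.trans h2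
      have h1' : T n (T c y) = T c (T n y) := by
        have := congrFun (hadd n c) y
        have h2 := congrFun (hadd c n) y
        rw [add_comm] at this
        simpa using this.symm.trans h2
      rw [h1, h1', hagree y hyU]
    calc T (m + d) z = T m (T d z) := congrFun (hadd m d) z
      _ = T n (T d z) := key
      _ = T (n + d) z := (congrFun (hadd n d) z).symm
end

section
/- Let X be a set, T : X → X a map, and h : X → 𝕋. For x, y ∈ X and p ∈ ℤ such that T^m(x) = T^n(y) for some m, n ∈ ℕ with m − n = p, define h̃(x,p,y) to be the common value of (∏_{i=0}^{N} h(T^i(x)))·(∏_{i=0}^{N−p} conj(h(T^i(y)))) for all sufficiently large N. Then h̃ is multiplicative: if T^m(x) = T^n(y) with m − n = p and T^a(y) = T^b(z) with a − b = q, then T^c(x) = T^d(z) for suitable c, d ∈ ℕ with c − d = p + q, and h̃(x,p,y)·h̃(y,q,z) = h̃(x,p+q,z). -/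
/-!
Both products in `h̃(y,q,z)` start at `i = 0`, so for `N ≥ p` the factor
`∏_{i ≤ N-p} h(T^i y)` of `h̃(y,q,z)` at level `N - p` cancels exactly against the conjugated
factor of `h̃(x,p,y)` at level `N`, because `conj w * w = |w|^2 = 1` on the circle.
What remains is the partial product of `h̃(x,p+q,z)` at level `N`.
-/

open Finset Filter ComplexConjugate

theorem Function.iterate_add_eq_iterate_add_of_iterate_eq {α : Type*} {f : α → α} {x y z : α}
    {m n a b : ℕ} (hxy : f^[m] x = f^[n] y) (hyz : f^[a] y = f^[b] z) :
    f^[m + a] x = f^[n + b] z := by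
  rw [add_comm m, Function.iterate_add_apply, hxy, ← Function.iterate_add_apply, add_comm a,
    Function.iterate_add_apply, hyz, ← Function.iterate_add_apply]

theorem Complex.prod_conj_mul_prod_eq_one {ι : Type*} (s : Finset ι) {f : ι → ℂ}
    (hf : ∀ i ∈ s, ‖f i‖ = 1) : (∏ i ∈ s, conj (f i)) * ∏ i ∈ s, f i = 1 := by
  rw [← prod_mul_distrib]
  refine prod_eq_one fun i hi => ?_
  rw [Complex.conj_mul', hf i hi]
  norm_num

theorem Int.tendsto_toNat_sub_atTop (p : ℤ) :
    Tendsto (fun N : ℕ => ((N : ℤ) - p).toNat) atTop atTop :=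
  tendsto_atTop_atTop.2 fun k => ⟨k + p.toNat, fun N hN => by omega⟩

section TwistedProd

variable {X : Type*} (T : X → X) (h : X → ℂ)

/-- The level-`N` partial product whose eventual value is `h̃(x,p,y)`; for `N < p` the
conjugated product is empty, because `Int.toNat` truncates at `0`. -/
def twistedProd (x : X) (p : ℤ) (y : X) (N : ℕ) : ℂ :=
  (∏ i ∈ range (N + 1), h (T^[i] x)) *
    ∏ i ∈ range (((N : ℤ) - p + 1).toNat), conj (h (T^[i] y))

theorem twistedProd_mul_twistedProd (hmod : ∀ x, ‖h x‖ = 1) (x y z : X) (p q : ℤ) {N : ℕ}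
    (hN : p ≤ N) :
    twistedProd T h x p y N * twistedProd T h y q z ((N : ℤ) - p).toNat =
      twistedProd T h x (p + q) z N := by
  set M := ((N : ℤ) - p).toNat
  have hlen_y : ((N : ℤ) - p + 1).toNat = M + 1 := by omega
  have hlen_z : ((M : ℤ) - q + 1).toNat = ((N : ℤ) - (p + q) + 1).toNat := by omega
  have hcancel := Complex.prod_conj_mul_prod_eq_one (range (M + 1))
    (f := fun i => h (T^[i] y)) fun i _ => hmod _
  simp only [twistedProd, hlen_y, hlen_z]
  linear_combination (∏ i ∈ range (N + 1), h (T^[i] x)) *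
    (∏ i ∈ range (((N : ℤ) - (p + q) + 1).toNat), conj (h (T^[i] z))) * hcancel

end TwistedProd

theorem stmt_14 {X : Type*} (T : X → X) (h : X → ℂ) (hmod : ∀ x : X, ‖h x‖ = 1)
    (x y z : X) (p q : ℤ) (m n a b : ℕ)
    (hp : (m : ℤ) - (n : ℤ) = p) (hq : (a : ℤ) - (b : ℤ) = q)
    (hxy : T^[m] x = T^[n] y) (hyz : T^[a] y = T^[b] z) :
    (((m + a : ℕ) : ℤ) - ((n + b : ℕ) : ℤ) = p + q ∧ T^[m + a] x = T^[n + b] z) ∧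
    (∀ v₁ v₂ v₃ : ℂ,
      (∀ᶠ N : ℕ in Filter.atTop,
        (∏ i ∈ Finset.range (N + 1), h (T^[i] x)) *
          (∏ i ∈ Finset.range (((N : ℤ) - p + 1).toNat),
            (starRingEnd ℂ) (h (T^[i] y))) = v₁) →
      (∀ᶠ N : ℕ in Filter.atTop,
        (∏ i ∈ Finset.range (N + 1), h (T^[i] y)) *
          (∏ i ∈ Finset.range (((N : ℤ) - q + 1).toNat),
            (starRingEnd ℂ) (h (T^[i] z))) = v₂) →
      (∀ᶠ N : ℕ in Filter.atTop,
        (∏ i ∈ Finset.range (N + 1), h (T^[i] x)) *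
          (∏ i ∈ Finset.range (((N : ℤ) - (p + q) + 1).toNat),
            (starRingEnd ℂ) (h (T^[i] z))) = v₃) →
      v₁ * v₂ = v₃) := by
  refine ⟨⟨by push_cast; omega, Function.iterate_add_eq_iterate_add_of_iterate_eq hxy hyz⟩, ?_⟩
  intro v₁ v₂ v₃ h₁ h₂ h₃
  obtain ⟨N, e₁, e₂, e₃, hN⟩ := (h₁.and <| ((Int.tendsto_toNat_sub_atTop p).eventually h₂).and <|
    h₃.and <| eventually_ge_atTop p.toNat).exists
  rw [← e₁, ← e₂, ← e₃]
  exact twistedProd_mul_twistedProd T h hmod x y z p q (by omega)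
end

section
/- Let G be a commutative group, ς : G × G → 𝕋 a bicharacter, B a complex algebra, u : G → B with u_g · u_h = ς(g,h) · u_{g+h} for all g,h, and τ : B → ℂ linear with τ(u_g·u_h) = τ(u_h·u_g) for all g,h. Suppose that for every g ∈ G, if ς(g,h)·ς(h,g)⁻¹ = 1 for all h ∈ G then g = 0, and suppose τ(u_0) = 1. Then τ(u_g) = 0 for every g ≠ 0. -/
theorem stmt_16 {G : Type*} [AddCommGroup G] {B : Type*} [Ring B] [Algebra ℂ B]
    (ς : G → G → ℂ) (hmod : ∀ g h : G, ‖ς g h‖ = 1)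
    (hleft : ∀ g g' h : G, ς (g + g') h = ς g h * ς g' h)
    (hright : ∀ g h h' : G, ς g (h + h') = ς g h * ς g h')
    (u : G → B) (hu : ∀ g h : G, u g * u h = ς g h • u (g + h))
    (τ : B →ₗ[ℂ] ℂ) (htr : ∀ g h : G, τ (u g * u h) = τ (u h * u g))
    (hnondeg : ∀ g : G, (∀ h : G, ς g h * (ς h g)⁻¹ = 1) → g = 0)
    (hτ0 : τ (u 0) = 1) :
    ∀ g : G, g ≠ 0 → τ (u g) = 0 := by
  have hne : ∀ g h : G, ς g h ≠ 0 := by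
    intro g h h0
    have := hmod g h
    rw [h0] at this
    simp at this
  have h0l : ∀ h : G, ς 0 h = 1 := by
    intro h
    have h1 := hleft 0 0 h
    rw [zero_add] at h1
    have := mul_left_cancel₀ (hne 0 h) (h1.symm.trans (mul_one (ς 0 h)).symm)
    exact this
  have hnegl : ∀ g h : G, ς (-g) h = (ς g h)⁻¹ := by
    intro g h
    have h1 := hleft (-g) g h
    rw [neg_add_cancel, h0l] at h1
    exact eq_inv_of_mul_eq_one_left h1.symm
  intro g hg
  by_contra hτ
  apply hg
  apply hnondeg
  intro h
  -- use trace property on a = g - h, b = h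
  have ha : g - h + h = g := by abel
  have e1 : τ (u (g - h) * u h) = ς (g - h) h * τ (u g) := by
    rw [hu, ha, map_smul, smul_eq_mul]
  have e2 : τ (u h * u (g - h)) = ς h (g - h) * τ (u g) := by
    have hb : h + (g - h) = g := by abel
    rw [hu, hb, map_smul, smul_eq_mul]
  have key : ς (g - h) h = ς h (g - h) := by
    have := (htr (g - h) h).symm
    rw [e1, e2] at this
    exact mul_right_cancel₀ hτ this.symm
  have l1 : ς (g - h) h = ς g h * (ς h h)⁻¹ := by
    rw [sub_eq_add_neg, hleft, hnegl]
  have l2 : ς h (g - h) = ς h g * (ς h h)⁻¹ := by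
    have : ς h (g - h) = ς h g * ς h (-h) := by
      rw [sub_eq_add_neg, hright]
    rw [this]
    congr 1
    have h1 := hright h h (-h)
    rw [add_neg_cancel] at h1
    have h00 : ς h 0 = 1 := by
      have h2 := hright h 0 0
      rw [add_zero] at h2
      exact mul_left_cancel₀ (hne h 0) (h2.symm.trans (mul_one (ς h 0)).symm)
    rw [h00] at h1
    exact eq_inv_of_mul_eq_one_left (mul_comm (ς h h) (ς h (-h)) ▸ h1.symm)
  have : ς g h = ς h g := by
    have := l1 ▸ l2 ▸ key
    exact mul_right_cancel₀ (inv_ne_zero (hne h h)) this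
  rw [this, mul_inv_cancel₀ (hne h g)]
end
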